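/- arXiv:2603.17724 — 2 statements merged into one kernel-verified Lean document; each statement's English description precedes it below -/
import Mathlib

section
/- The map S ↦ 𝔄_S is injective up to isomorphism: if S, T ⊆ ℕ \ {0} and S ≠ T, then there is no isomorphism of Boolean frames between 𝔄_S = (B, f_S) and 𝔄_T = (B, f_T). (Key point: for n ≥ 1, the element u_n equals the join of the complements of f_S^{(i+1)}(ℕ) for 0 ≤ i ≤ n, and the equation f_S(u_n) ⊓ u_n = ∅ holds if and only if n ∈ S.) -/
universe u v

/-- A congruence of the Boolean frame `(α, f)`: an equivalence relation compatible
with the Boolean operations and with `f`. -/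
structure IsCongr {α : Type u} [BooleanAlgebra α] (f : α → α) (Θ : α → α → Prop) : Prop where
  refl : ∀ x, Θ x x
  symm : ∀ {x y}, Θ x y → Θ y x
  trans : ∀ {x y z}, Θ x y → Θ y z → Θ x z
  inf : ∀ {x y x' y'}, Θ x y → Θ x' y' → Θ (x ⊓ x') (y ⊓ y')
  compl : ∀ {x y}, Θ x y → Θ xᶜ yᶜ
  map : ∀ {x y}, Θ x y → Θ (f x) (f y)

/-- `B` is (the universe of) a subalgebra of the Boolean frame `(α, f)`:
it contains `⊥` and is closed under `⊓`, complement and `f`. -/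
def IsSubalg {α : Type u} [BooleanAlgebra α] (f : α → α) (B : Set α) : Prop :=
  ⊥ ∈ B ∧ (∀ x ∈ B, ∀ y ∈ B, x ⊓ y ∈ B) ∧ (∀ x ∈ B, xᶜ ∈ B) ∧ (∀ x ∈ B, f x ∈ B)

/-- A congruence of the Boolean frame whose universe is the subset `B` of `α`
(with the operations restricted from `(α, f)`), encoded as a relation on `α`
whose domain is contained in `B`. -/
structure IsCongrOn {α : Type u} [BooleanAlgebra α] (f : α → α) (B : Set α)
    (Θ : α → α → Prop) : Prop where
  dom : ∀ {x y}, Θ x y → x ∈ B ∧ y ∈ B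
  refl : ∀ x ∈ B, Θ x x
  symm : ∀ {x y}, Θ x y → Θ y x
  trans : ∀ {x y z}, Θ x y → Θ y z → Θ x z
  inf : ∀ {x y x' y'}, Θ x y → Θ x' y' → Θ (x ⊓ x') (y ⊓ y')
  compl : ∀ {x y}, Θ x y → Θ xᶜ yᶜ
  map : ∀ {x y}, Θ x y → Θ (f x) (f y)

/-- The Boolean frame `(α, f)` has the congruence extension property: every congruence
of every subalgebra is the restriction of a congruence of the whole frame. -/
def HasCEP {α : Type u} [BooleanAlgebra α] (f : α → α) : Prop :=
  ∀ B : Set α, IsSubalg f B → ∀ Θ : α → α → Prop, IsCongrOn f B Θ →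
    ∃ Ψ : α → α → Prop, IsCongr f Ψ ∧ ∀ x y, Θ x y ↔ (Ψ x y ∧ x ∈ B ∧ y ∈ B)

/-- The Boolean algebra of finite and cofinite subsets of `ℕ`. -/
def BFC : Set (Set ℕ) := {X : Set ℕ | X.Finite ∨ Xᶜ.Finite}

open Classical in
/-- The operation `f_S` (defined on all of the powerset of `ℕ`; the Boolean frame `𝔄_S`
is its restriction to the finite-cofinite algebra `BFC`, which is closed under `f_S`):
`f_S(ℕ) = b₀`, `f_S(bₙ) = bₙ₊₁`, `f_S(aₙ) = bₙ`, `f_S(uₙ) = ℕ \ uₙ` if `n ≥ 1` and `n ∈ S`,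
`f_S(uₙ) = ℕ` if `n ≥ 1` and `n ∉ S`, `f_S(∅) = ∅`, and `f_S(x) = ℕ` otherwise,
where `aₙ = {n}`, `bₙ = ℕ \ {n}`, `uₙ = {0, …, n}`. -/
noncomputable def fS (S : Set ℕ) (X : Set ℕ) : Set ℕ :=
  if X = Set.univ then ({0} : Set ℕ)ᶜ
  else if h : ∃ n : ℕ, X = ({n} : Set ℕ)ᶜ then ({h.choose + 1} : Set ℕ)ᶜ
  else if h : ∃ n : ℕ, X = ({n} : Set ℕ) then ({h.choose} : Set ℕ)ᶜ
  else if h : ∃ n : ℕ, 1 ≤ n ∧ X = {k : ℕ | k ≤ n} then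
    (if h.choose ∈ S then ({k : ℕ | k ≤ h.choose} : Set ℕ)ᶜ else Set.univ)
  else if X = ∅ then ∅
  else Set.univ

section Aux

variable (S : Set ℕ)

lemma fS_univ : fS S Set.univ = ({0} : Set ℕ)ᶜ := by
  unfold fS; rw [if_pos rfl]

lemma compl_singleton_ne_univ (n : ℕ) : ({n} : Set ℕ)ᶜ ≠ Set.univ := by
  intro h
  have : n ∈ ({n} : Set ℕ)ᶜ := h ▸ Set.mem_univ n
  exact this rfl

lemma fS_compl_singleton (n : ℕ) : fS S ({n} : Set ℕ)ᶜ = ({n + 1} : Set ℕ)ᶜ := by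
  unfold fS
  rw [if_neg (compl_singleton_ne_univ n)]
  have h : ∃ m : ℕ, ({n} : Set ℕ)ᶜ = ({m} : Set ℕ)ᶜ := ⟨n, rfl⟩
  rw [dif_pos h]
  have := h.choose_spec
  rw [compl_inj_iff, Set.singleton_eq_singleton_iff] at this
  rw [← this]

lemma singleton_ne_univ (n : ℕ) : ({n} : Set ℕ) ≠ Set.univ := by
  intro h
  have : n + 1 ∈ ({n} : Set ℕ) := h ▸ Set.mem_univ _
  simp at this

lemma singleton_ne_compl_singleton (n m : ℕ) : ({n} : Set ℕ) ≠ ({m} : Set ℕ)ᶜ := by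
  intro h
  have h1 : n + m + 1 ∈ ({m} : Set ℕ)ᶜ := by simp; omega
  have h2 : n + m + 2 ∈ ({m} : Set ℕ)ᶜ := by simp; omega
  rw [← h] at h1 h2
  simp at h1 h2; omega

lemma fS_singleton (n : ℕ) : fS S ({n} : Set ℕ) = ({n} : Set ℕ)ᶜ := by
  unfold fS
  rw [if_neg (singleton_ne_univ n)]
  rw [dif_neg (by push_neg; exact fun m => singleton_ne_compl_singleton n m)]
  have h : ∃ m : ℕ, ({n} : Set ℕ) = ({m} : Set ℕ) := ⟨n, rfl⟩
  rw [dif_pos h]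
  have := h.choose_spec
  rw [Set.singleton_eq_singleton_iff] at this
  rw [← this]

lemma un_ne_univ (n : ℕ) : {k : ℕ | k ≤ n} ≠ Set.univ := by
  intro h
  have : n + 1 ∈ {k : ℕ | k ≤ n} := h ▸ Set.mem_univ _
  simp at this

open Classical in
lemma fS_un {n : ℕ} (hn : 1 ≤ n) :
    fS S {k : ℕ | k ≤ n} = if n ∈ S then ({k : ℕ | k ≤ n} : Set ℕ)ᶜ else Set.univ := by
  unfold fS
  rw [if_neg (un_ne_univ n)]
  rw [dif_neg (by
    push_neg; intro m h
    have h1 : n + 1 ∉ {k : ℕ | k ≤ n} := by simp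
    have h2 : n + 2 ∉ {k : ℕ | k ≤ n} := by simp
    rw [h] at h1 h2
    simp at h1 h2; omega)]
  rw [dif_neg (by
    push_neg; intro m h
    have h0 : (0 : ℕ) ∈ {k : ℕ | k ≤ n} := by simp
    have h1 : (1 : ℕ) ∈ {k : ℕ | k ≤ n} := by simpa using hn
    rw [h] at h0 h1
    simp at h0 h1; omega)]
  have h : ∃ m : ℕ, 1 ≤ m ∧ {k : ℕ | k ≤ n} = {k : ℕ | k ≤ m} := ⟨n, hn, rfl⟩
  rw [dif_pos h]
  have hc := h.choose_spec.2
  have heq : h.choose = n := by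
    have h1 := (Set.ext_iff.mp hc n).mp (by simp)
    have h2 := (Set.ext_iff.mp hc h.choose).mpr (by simp)
    simp at h1 h2; omega
  rw [heq]

lemma fS_iter (n : ℕ) : (fS S)^[n + 1] Set.univ = ({n} : Set ℕ)ᶜ := by
  induction n with
  | zero => simpa using fS_univ S
  | succ i ih =>
      rw [Function.iterate_succ_apply', ih, fS_compl_singleton]

lemma mem_BFC_finite {X : Set ℕ} (h : X.Finite) : X ∈ BFC := Or.inl h

lemma mem_BFC_compl {X : Set ℕ} (h : X ∈ BFC) : Xᶜ ∈ BFC := by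
  rcases h with h | h
  · exact Or.inr (by simpa using h)
  · exact Or.inl h

lemma un_finite (n : ℕ) : {k : ℕ | k ≤ n}.Finite :=
  (Set.finite_le_nat n)

end Aux

/-- the map `S ↦ 𝔄_S` is injective up to isomorphism: for `S ≠ T`
(both `⊆ ℕ \ {0}`) there is no isomorphism of Boolean frames `𝔄_S ≅ 𝔄_T`.
(Key point: for `n ≥ 1`, `uₙ` is the join of the complements of `f_S^{(i+1)}(ℕ)`
for `0 ≤ i ≤ n`, and `f_S(uₙ) ⊓ uₙ = ∅` holds iff `n ∈ S`.) -/
theorem stmt_5 (S T : Set ℕ) (hS : 0 ∉ S) (hT : 0 ∉ T) (hST : S ≠ T) :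
    (¬ ∃ φ : Set ℕ → Set ℕ, Set.BijOn φ BFC BFC ∧
        φ (∅ : Set ℕ) = (∅ : Set ℕ) ∧
        (∀ x ∈ BFC, ∀ y ∈ BFC, φ (x ⊓ y) = φ x ⊓ φ y) ∧
        (∀ x ∈ BFC, φ xᶜ = (φ x)ᶜ) ∧
        (∀ x ∈ BFC, φ (fS S x) = fS T (φ x))) ∧
    (∀ n : ℕ, 1 ≤ n →
      {k : ℕ | k ≤ n} = ⋃ i ∈ Finset.range (n + 1), ((fS S)^[i + 1] Set.univ)ᶜ) ∧
    (∀ n : ℕ, 1 ≤ n → (fS S {k : ℕ | k ≤ n} ⊓ {k : ℕ | k ≤ n} = (∅ : Set ℕ) ↔ n ∈ S)) := by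
  refine ⟨?_, ?_, ?_⟩
  · -- no isomorphism
    rintro ⟨φ, hbij, h0, hinf, hcompl, hf⟩
    have hemp : (∅ : Set ℕ) ∈ BFC := mem_BFC_finite Set.finite_empty
    have huniv : (Set.univ : Set ℕ) ∈ BFC := Or.inr (by simp)
    have hφuniv : φ Set.univ = Set.univ := by
      have := hcompl ∅ hemp
      rw [h0] at this
      simpa using this
    have hφcs : ∀ i : ℕ, φ ({i} : Set ℕ)ᶜ = ({i} : Set ℕ)ᶜ := by
      intro i
      induction i with
      | zero =>
          have := hf Set.univ huniv
          rw [fS_univ, hφuniv, fS_univ] at this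
          exact this
      | succ j ih =>
          have hmem : ({j} : Set ℕ)ᶜ ∈ BFC :=
            mem_BFC_compl (mem_BFC_finite (Set.finite_singleton j))
          have := hf _ hmem
          rw [fS_compl_singleton, ih, fS_compl_singleton] at this
          exact this
    have hφu : ∀ n : ℕ, φ {k : ℕ | k ≤ n} = {k : ℕ | k ≤ n} := by
      intro n
      induction n with
      | zero =>
          have h01 : {k : ℕ | k ≤ 0} = ({0} : Set ℕ) := by ext k; simp
          have hmem : ({0} : Set ℕ)ᶜ ∈ BFC :=
            mem_BFC_compl (mem_BFC_finite (Set.finite_singleton 0))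
          have := hcompl _ hmem
          rw [hφcs 0, compl_compl] at this
          rw [h01]
          exact this
      | succ m ih =>
          have key : {k : ℕ | k ≤ m + 1} = ({k : ℕ | k ≤ m}ᶜ ⊓ ({m + 1} : Set ℕ)ᶜ)ᶜ := by
            ext k
            simp [Set.mem_inter_iff]
            omega
          have hm1 : {k : ℕ | k ≤ m} ∈ BFC := mem_BFC_finite (un_finite m)
          have hm2 : ({m + 1} : Set ℕ) ∈ BFC := mem_BFC_finite (Set.finite_singleton _)
          have hmc : {k : ℕ | k ≤ m}ᶜ ∈ BFC := mem_BFC_compl hm1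
          have hsc : ({m + 1} : Set ℕ)ᶜ ∈ BFC := mem_BFC_compl hm2
          have hinter : {k : ℕ | k ≤ m}ᶜ ⊓ ({m + 1} : Set ℕ)ᶜ ∈ BFC := by
            refine Or.inr ?_
            have hcc : ({k : ℕ | k ≤ m}ᶜ ⊓ ({m + 1} : Set ℕ)ᶜ)ᶜ
                = {k : ℕ | k ≤ m} ∪ {m + 1} := by
              simp [Set.compl_inter]
            rw [hcc]
            exact (un_finite m).union (Set.finite_singleton _)
          have e1 : φ ({k : ℕ | k ≤ m}ᶜ) = {k : ℕ | k ≤ m}ᶜ := by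
            have := hcompl _ hm1
            rw [ih] at this
            exact this
          calc φ {k : ℕ | k ≤ m + 1}
              = φ (({k : ℕ | k ≤ m}ᶜ ⊓ ({m + 1} : Set ℕ)ᶜ)ᶜ) := by rw [← key]
            _ = (φ ({k : ℕ | k ≤ m}ᶜ ⊓ ({m + 1} : Set ℕ)ᶜ))ᶜ := hcompl _ hinter
            _ = (φ ({k : ℕ | k ≤ m}ᶜ) ⊓ φ (({m + 1} : Set ℕ)ᶜ))ᶜ := by
                rw [hinf _ hmc _ hsc]
            _ = ({k : ℕ | k ≤ m}ᶜ ⊓ ({m + 1} : Set ℕ)ᶜ)ᶜ := by rw [e1, hφcs (m + 1)]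
            _ = {k : ℕ | k ≤ m + 1} := key.symm
    have hsep : ∃ n : ℕ, (n ∈ S ∧ n ∉ T) ∨ (n ∈ T ∧ n ∉ S) := by
      by_contra h
      push_neg at h
      apply hST
      ext n
      exact ⟨(h n).1, (h n).2⟩
    obtain ⟨n, hn⟩ := hsep
    have hn1 : 1 ≤ n := by
      rcases hn with ⟨h1, _⟩ | ⟨h1, _⟩
      · rcases Nat.eq_zero_or_pos n with rfl | h
        · exact absurd h1 hS
        · exact h
      · rcases Nat.eq_zero_or_pos n with rfl | h
        · exact absurd h1 hT
        · exact h
    have humem : {k : ℕ | k ≤ n} ∈ BFC := mem_BFC_finite (un_finite n)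
    have hfeq := hf _ humem
    rw [hφu n] at hfeq
    rcases hn with ⟨hnS, hnT⟩ | ⟨hnT, hnS⟩
    · rw [fS_un S hn1, fS_un T hn1, if_pos hnS, if_neg hnT] at hfeq
      have hc := hcompl _ humem
      rw [hφu n] at hc
      rw [hc] at hfeq
      have h0' : (0 : ℕ) ∈ ({k : ℕ | k ≤ n} : Set ℕ)ᶜ := hfeq ▸ Set.mem_univ 0
      simp at h0'
    · rw [fS_un S hn1, fS_un T hn1, if_neg hnS, if_pos hnT, hφuniv] at hfeq
      have h0' : (0 : ℕ) ∈ ({k : ℕ | k ≤ n} : Set ℕ)ᶜ := hfeq.symm ▸ Set.mem_univ 0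
      simp at h0'
  · -- u_n as a join
    intro n hn
    ext k
    simp only [Set.mem_iUnion, Finset.mem_range, fS_iter, compl_compl, Set.mem_singleton_iff,
      Set.mem_setOf_eq]
    constructor
    · intro hk
      exact ⟨k, by omega, rfl⟩
    · rintro ⟨i, hi, rfl⟩
      omega
  · -- key equation iff
    intro n hn
    rw [fS_un S hn]
    by_cases h : n ∈ S
    · rw [if_pos h]
      simp [h]
    · rw [if_neg h]
      constructor
      · intro heq
        exfalso
        have h0' : (0 : ℕ) ∈ (Set.univ ⊓ {k : ℕ | k ≤ n} : Set ℕ) := by simp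
        rw [heq] at h0'
        exact h0'
      · intro hh; exact absurd hh h
end

section
/- Let 𝔄 be the Boolean frame whose Boolean algebra is P(ℕ) × P(ℕ) and whose unary operation F is defined by F(a, b) = (f(a), f(b)) if a = b and F(a, b) = (ℕ, ℕ) if a ≠ b, where f(X) = ℕ if 0 ∈ X and f(X) = {n − 1 : n ∈ X} otherwise, and let U be a nonprincipal ultrafilter on ℕ. Then the ultrapower 𝔄^ℕ/U does not have the congruence extension property; moreover HS(𝔄^ℕ/U) ≠ SH(𝔄^ℕ/U). -/
universe u v

/-- `φ` is a homomorphism of Boolean frames `(α, f) → (β, g)`. -/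
def IsHom {α : Type u} {β : Type v} [BooleanAlgebra α] [BooleanAlgebra β]
    (f : α → α) (g : β → β) (φ : α → β) : Prop :=
  φ ⊥ = ⊥ ∧ (∀ x y, φ (x ⊓ y) = φ x ⊓ φ y) ∧ (∀ x, φ xᶜ = (φ x)ᶜ) ∧ ∀ x, φ (f x) = g (φ x)

/-- `(δ, g) ∈ HS(α, f)`: `(δ, g)` is a homomorphic image of a subalgebra of `(α, f)`. -/
def MemHS {α δ : Type u} [BooleanAlgebra α] [BooleanAlgebra δ] (f : α → α) (g : δ → δ) : Prop :=
  ∃ (γ : Type u) (iγ : BooleanAlgebra γ) (h : γ → γ) (i : γ → α) (s : γ → δ),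
    @IsHom γ α iγ _ h f i ∧ Function.Injective i ∧
    @IsHom γ δ iγ _ h g s ∧ Function.Surjective s

/-- `(δ, g) ∈ SH(α, f)`: `(δ, g)` embeds into a homomorphic image of `(α, f)`. -/
def MemSH {α δ : Type u} [BooleanAlgebra α] [BooleanAlgebra δ] (f : α → α) (g : δ → δ) : Prop :=
  ∃ (γ : Type u) (iγ : BooleanAlgebra γ) (h : γ → γ) (s : α → γ) (i : δ → γ),
    @IsHom α γ _ iγ f h s ∧ Function.Surjective s ∧
    @IsHom δ γ _ iγ g h i ∧ Function.Injective i

open Filter in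
/-- The ultrapower Boolean algebra: the Boolean operations on the quotient
`Filter.Germ (U : Filter I) α` of `I → α` by `U`-a.e. equality are defined
pointwise on representatives. -/
noncomputable instance Filter.Germ.instBooleanAlgebraGerm {ι : Type u} {l : Filter ι}
    {β : Type v} [BooleanAlgebra β] : BooleanAlgebra (Germ l β) where
  __ := (inferInstance : DistribLattice (Germ l β))
  __ := (inferInstance : BoundedOrder (Germ l β))
  compl := map compl
  sdiff x y := x ⊓ (map compl y)
  himp x y := (map compl x) ⊔ y
  inf_compl_le_bot x := inductionOn x fun f => Eventually.of_forall fun i => by simp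
  top_le_sup_compl x := inductionOn x fun f => Eventually.of_forall fun i => by simp
  sdiff_eq x y := rfl
  himp_eq x y := by
    refine inductionOn₂ x y fun f g => ?_
    change (↑(fun i => (f i)ᶜ) ⊔ (g : Germ l β)) = _
    exact sup_comm _ _

open Classical in
/-- The operation of the Boolean frame `𝔅` on the powerset of `ℕ`:
`f(X) = ℕ` if `0 ∈ X`, and `f(X) = {n - 1 : n ∈ X}` otherwise. -/
noncomputable def fB (X : Set ℕ) : Set ℕ :=
  if 0 ∈ X then Set.univ else (fun n => n - 1) '' X

open Classical in
/-- The operation `F` on `𝒫(ℕ) × 𝒫(ℕ)`: `F(a, b) = (fB a, fB b)` if `a = b`,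
and `F(a, b) = (ℕ, ℕ)` otherwise. -/
noncomputable def F12 : Set ℕ × Set ℕ → Set ℕ × Set ℕ := fun p =>
  if p.1 = p.2 then (fB p.1, fB p.2) else (Set.univ, Set.univ)

/-!
In the diagonal subalgebra `{(a, a)}` of the ultrapower, call two elements equivalent when, at
`U`-almost every index `i`, they agree outside a window `[i - k, i]` of fixed width `k`. As `U` is
nonprincipal, `0` eventually lies outside every window, so `fB` only widens the window by one and
this is a congruence of the diagonal subalgebra. It identifies `({i}, {i})` with `⊥`; a congruence
of the whole ultrapower doing so also identifies `({i}, ∅)` with `⊥` and, applying `F`, `⊤` with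
`⊥`.

Modulo the same congruence the tail `t = ((i, ∞), (i, ∞))` satisfies `F t ≡ t` and `F tᶜ = ⊤`, so
the elements equivalent to one of `⊥, t, tᶜ, ⊤` form a subalgebra mapping onto the four-element
frame `gFour`, which has a fixed point other than `⊥, ⊤`. But every nonzero element of the
ultrapower lies above an off-diagonal one, which `F` sends to `⊤`; hence each homomorphic image of
the ultrapower is trivial or isomorphic to it, and there `F` fixes only `⊥` and `⊤`.
-/

open Filter Set

section BooleanFrame

variable {α δ : Type u} [BooleanAlgebra α] [BooleanAlgebra δ] {f : α → α} {g : δ → δ}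

theorem IsHom.map_top {β : Type v} [BooleanAlgebra β] {g : β → β} {φ : α → β}
    (hφ : IsHom f g φ) : φ ⊤ = ⊤ := by
  have h := hφ.2.2.1 ⊥
  rwa [compl_bot, hφ.1, compl_bot] at h

theorem IsHom.injective_or_top_eq_bot {γ : Type v} [BooleanAlgebra γ] {h : γ → γ} {s : α → γ}
    (hs : IsHom f h s) (hf : f ⊥ = ⊥) (hf_top : ∀ z ≠ ⊥, ∃ y ≤ z, f y = ⊤) :
    Function.Injective s ∨ (⊤ : γ) = ⊥ := by
  refine or_iff_not_imp_left.2 fun hinj => ?_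
  obtain ⟨hbot, hinf, hcompl, hmap⟩ := id hs
  obtain ⟨x, x', hxx', hne⟩ := Function.not_injective_iff.1 hinj
  have hker : ∀ {a b}, s a = s b → s (a ⊓ bᶜ) = ⊥ := fun hab => by
    rw [hinf, hcompl, hab, inf_compl_self]
  obtain ⟨z, hz, hsz⟩ : ∃ z ≠ ⊥, s z = ⊥ := by
    by_cases hle : x ≤ x'
    · exact ⟨x' ⊓ xᶜ, fun h => hne (hle.antisymm (disjoint_compl_right_iff.1 (disjoint_iff.2 h))),
        hker hxx'.symm⟩
    · exact ⟨x ⊓ x'ᶜ, fun h => hle (disjoint_compl_right_iff.1 (disjoint_iff.2 h)), hker hxx'⟩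
  obtain ⟨y, hyz, hy⟩ := hf_top z hz
  have hsy : s y = ⊥ := by rw [← inf_eq_left.2 hyz, hinf, hsz, inf_bot_eq]
  rw [← hs.map_top, ← hy, hmap, hsy, ← hbot, ← hmap, hf]

theorem not_memSH_of_fixedPoint (hf : f ⊥ = ⊥) (hf_top : ∀ z ≠ ⊥, ∃ y ≤ z, f y = ⊤)
    (hfix : ∀ x, f x = x → x = ⊥ ∨ x = ⊤) {d : δ} (hd : g d = d) (hd_bot : d ≠ ⊥)
    (hd_top : d ≠ ⊤) : ¬ MemSH f g := by
  rintro ⟨γ, _, h, s, i, hs, hs_surj, hi, hi_inj⟩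
  rcases hs.injective_or_top_eq_bot hf hf_top with hs_inj | htriv
  · obtain ⟨y, hy⟩ := hs_surj (i d)
    have hfy : f y = y := hs_inj (by rw [hs.2.2.2, hy, ← hi.2.2.2, hd])
    rcases hfix y hfy with rfl | rfl
    · exact hd_bot (hi_inj (by rw [← hy, hs.1, hi.1]))
    · exact hd_top (hi_inj (by rw [← hy, hs.map_top, hi.map_top]))
  · have := subsingleton_of_bot_eq_top htriv.symm
    exact hd_bot (hi_inj (Subsingleton.elim _ _))

theorem memHS_of_booleanSubalgebra (L : BooleanSubalgebra α) (hL : ∀ x ∈ L, f x ∈ L)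
    (s : α → δ) (hbot : s ⊥ = ⊥) (hinf : ∀ x ∈ L, ∀ y ∈ L, s (x ⊓ y) = s x ⊓ s y)
    (hcompl : ∀ x ∈ L, s xᶜ = (s x)ᶜ) (hmap : ∀ x ∈ L, s (f x) = g (s x))
    (hsurj : ∀ d, ∃ x ∈ L, s x = d) : MemHS f g :=
  ⟨L, inferInstance, fun x => ⟨f x, hL x x.2⟩, (↑), fun x => s x,
    ⟨rfl, fun _ _ => rfl, fun _ => rfl, fun _ => rfl⟩, Subtype.coe_injective,
    ⟨hbot, fun x y => hinf x x.2 y y.2, fun x => hcompl x x.2, fun x => hmap x x.2⟩,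
    fun d => let ⟨x, hx, hsx⟩ := hsurj d; ⟨⟨x, hx⟩, hsx⟩⟩

theorem BooleanSubalgebra.isSubalg (L : BooleanSubalgebra α) (hL : ∀ x ∈ L, f x ∈ L) :
    IsSubalg f L :=
  ⟨L.bot_mem, fun _ hx _ hy => L.inf_mem hx hy, fun _ hx => L.compl_mem hx, hL⟩

theorem not_hasCEP_of_isCongrOn {B : Set α} {Θ : α → α → Prop} (hB : IsSubalg f B)
    (hΘ : IsCongrOn f B Θ) (hf : f ⊥ = ⊥) {b a : α} (hb : Θ b ⊥) (hba : f (b ⊓ a) = ⊤)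
    (hΘ_top : ¬ Θ ⊤ ⊥) : ¬ HasCEP f := by
  intro hCEP
  obtain ⟨Ψ, hΨ, hΘΨ⟩ := hCEP B hB Θ hΘ
  have hΨ_ba : Ψ (b ⊓ a) (⊥ ⊓ a) := hΨ.inf ((hΘΨ b ⊥).1 hb).1 (hΨ.refl a)
  have hΨ_top : Ψ ⊤ ⊥ := by simpa only [bot_inf_eq, hba, hf] using hΨ.map hΨ_ba
  have htop : ⊤ ∈ B := by simpa using hB.2.2.1 ⊥ hB.1
  exact hΘ_top ((hΘΨ ⊤ ⊥).2 ⟨hΨ_top, htop, hB.1⟩)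

end BooleanFrame

def AgreeOutside {α : Type u} [BooleanAlgebra α] (w : ℕ → α) (x y : α) : Prop :=
  ∃ k, x ⊓ (w k)ᶜ = y ⊓ (w k)ᶜ

namespace AgreeOutside

variable {α : Type u} [BooleanAlgebra α] {w : ℕ → α} {x y z x' y' : α}

theorem refl (x : α) : AgreeOutside w x x := ⟨0, rfl⟩

theorem symm (h : AgreeOutside w x y) : AgreeOutside w y x :=
  let ⟨k, hk⟩ := h; ⟨k, hk.symm⟩

theorem exists_common (hw : Monotone w) (h : AgreeOutside w x y) (h' : AgreeOutside w x' y') :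
    ∃ k, x ⊓ (w k)ᶜ = y ⊓ (w k)ᶜ ∧ x' ⊓ (w k)ᶜ = y' ⊓ (w k)ᶜ := by
  have mono : ∀ {a b : α} {k k'}, k ≤ k' → a ⊓ (w k)ᶜ = b ⊓ (w k)ᶜ →
      a ⊓ (w k')ᶜ = b ⊓ (w k')ᶜ := fun hkk' hab => by
    rw [← inf_eq_right.2 (compl_le_compl (hw hkk')), ← inf_assoc, hab, inf_assoc]
  obtain ⟨k, hk⟩ := h
  obtain ⟨k', hk'⟩ := h'
  exact ⟨max k k', mono (le_max_left k k') hk, mono (le_max_right k k') hk'⟩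

theorem trans (hw : Monotone w) (h : AgreeOutside w x y) (h' : AgreeOutside w y z) :
    AgreeOutside w x z :=
  let ⟨k, hk, hk'⟩ := exists_common hw h h'; ⟨k, hk.trans hk'⟩

theorem inf (hw : Monotone w) (h : AgreeOutside w x y) (h' : AgreeOutside w x' y') :
    AgreeOutside w (x ⊓ x') (y ⊓ y') := by
  obtain ⟨k, hk, hk'⟩ := exists_common hw h h'
  exact ⟨k, by rw [inf_inf_distrib_right, hk, hk', ← inf_inf_distrib_right]⟩

theorem compl (h : AgreeOutside w x y) : AgreeOutside w xᶜ yᶜ := by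
  obtain ⟨k, hk⟩ := h
  have key : ∀ a : α, aᶜ ⊓ (w k)ᶜ = (a ⊓ (w k)ᶜ)ᶜ ⊓ (w k)ᶜ := fun a => by
    rw [compl_inf, inf_sup_right, compl_inf_self, sup_bot_eq]
  exact ⟨k, by rw [key, key y, hk]⟩

theorem sup (hw : Monotone w) (h : AgreeOutside w x y) (h' : AgreeOutside w x' y') :
    AgreeOutside w (x ⊔ x') (y ⊔ y') := by
  simpa only [compl_inf, compl_compl] using (h.compl.inf hw h'.compl).compl

end AgreeOutside

section PairEmb

variable {α : Type u} [BooleanAlgebra α]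

def pairEmb (t : α) (p : Bool × Bool) : α :=
  (if p.1 then t else ⊥) ⊔ (if p.2 then tᶜ else ⊥)

variable {t : α}

theorem pairEmb_inf (p q : Bool × Bool) : pairEmb t (p ⊓ q) = pairEmb t p ⊓ pairEmb t q := by
  rcases p with ⟨_ | _, _ | _⟩ <;> rcases q with ⟨_ | _, _ | _⟩ <;> simp [pairEmb]

theorem pairEmb_sup (p q : Bool × Bool) : pairEmb t (p ⊔ q) = pairEmb t p ⊔ pairEmb t q := by
  rcases p with ⟨_ | _, _ | _⟩ <;> rcases q with ⟨_ | _, _ | _⟩ <;> simp [pairEmb]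

theorem pairEmb_compl (p : Bool × Bool) : pairEmb t pᶜ = (pairEmb t p)ᶜ := by
  rcases p with ⟨_ | _, _ | _⟩ <;> simp [pairEmb]

theorem pairEmb_bot : pairEmb t ⊥ = ⊥ := by
  simp [pairEmb]

theorem pairEmb_inf_self (p : Bool × Bool) : pairEmb t p ⊓ t = if p.1 then t else ⊥ := by
  rcases p with ⟨_ | _, _ | _⟩ <;> simp [pairEmb]

theorem pairEmb_inf_compl_self (p : Bool × Bool) : pairEmb t p ⊓ tᶜ = if p.2 then tᶜ else ⊥ := by
  rcases p with ⟨_ | _, _ | _⟩ <;> simp [pairEmb]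

theorem pairEmb_mem {L : BooleanSubalgebra α} (ht : t ∈ L) (p : Bool × Bool) : pairEmb t p ∈ L :=
  L.sup_mem (by split_ifs <;> simp [ht]) (by split_ifs <;> simp [L.compl_mem ht])

end PairEmb

section PairClass

variable {α : Type u} [BooleanAlgebra α] {w : ℕ → α} {t x y : α}

theorem AgreeOutside.eq_of_ite {a b : Bool} (ht : ¬ AgreeOutside w t ⊥)
    (h : AgreeOutside w (if a then t else ⊥) (if b then t else ⊥)) : a = b := by
  cases a <;> cases b <;> simp only [Bool.false_eq_true, if_true, if_false] at h
  · rfl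
  · exact absurd h.symm ht
  · exact absurd h ht
  · rfl

theorem AgreeOutside.pairEmb_injective (hw : Monotone w) (ht : ¬ AgreeOutside w t ⊥)
    (htc : ¬ AgreeOutside w tᶜ ⊥) {p q : Bool × Bool}
    (h : AgreeOutside w (pairEmb t p) (pairEmb t q)) : p = q := by
  have h₁ := h.inf hw (refl t)
  have h₂ := h.inf hw (refl tᶜ)
  rw [pairEmb_inf_self, pairEmb_inf_self] at h₁
  rw [pairEmb_inf_compl_self, pairEmb_inf_compl_self] at h₂
  exact Prod.ext (h₁.eq_of_ite ht) (h₂.eq_of_ite htc)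

def pairSubalgebra (hw : Monotone w) (t : α) : BooleanSubalgebra α where
  carrier := {x | ∃ p, AgreeOutside w x (pairEmb t p)}
  supClosed' _ := fun ⟨p, hp⟩ _ ⟨q, hq⟩ => ⟨p ⊔ q, by rw [pairEmb_sup]; exact hp.sup hw hq⟩
  infClosed' _ := fun ⟨p, hp⟩ _ ⟨q, hq⟩ => ⟨p ⊓ q, by rw [pairEmb_inf]; exact hp.inf hw hq⟩
  compl_mem' := fun ⟨p, hp⟩ => ⟨pᶜ, by rw [pairEmb_compl]; exact hp.compl⟩
  bot_mem' := ⟨⊥, by rw [pairEmb_bot]; exact .refl ⊥⟩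

noncomputable def pairClass (w : ℕ → α) (t x : α) : Bool × Bool :=
  Classical.epsilon fun p => AgreeOutside w x (pairEmb t p)

theorem agreeOutside_pairClass {hw : Monotone w} (hx : x ∈ pairSubalgebra hw t) :
    AgreeOutside w x (pairEmb t (pairClass w t x)) :=
  Classical.epsilon_spec hx

theorem pairClass_eq (hw : Monotone w) (ht : ¬ AgreeOutside w t ⊥)
    (htc : ¬ AgreeOutside w tᶜ ⊥) {p : Bool × Bool} (h : AgreeOutside w x (pairEmb t p)) :
    pairClass w t x = p :=
  AgreeOutside.pairEmb_injective hw ht htc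
    ((agreeOutside_pairClass (hw := hw) ⟨p, h⟩).symm.trans hw h)

theorem pairClass_inf (hw : Monotone w) (ht : ¬ AgreeOutside w t ⊥)
    (htc : ¬ AgreeOutside w tᶜ ⊥) (hx : x ∈ pairSubalgebra hw t)
    (hy : y ∈ pairSubalgebra hw t) :
    pairClass w t (x ⊓ y) = pairClass w t x ⊓ pairClass w t y :=
  pairClass_eq hw ht htc <| by
    rw [pairEmb_inf]; exact (agreeOutside_pairClass hx).inf hw (agreeOutside_pairClass hy)

theorem pairClass_compl (hw : Monotone w) (ht : ¬ AgreeOutside w t ⊥)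
    (htc : ¬ AgreeOutside w tᶜ ⊥) (hx : x ∈ pairSubalgebra hw t) :
    pairClass w t xᶜ = (pairClass w t x)ᶜ :=
  pairClass_eq hw ht htc <| by rw [pairEmb_compl]; exact (agreeOutside_pairClass hx).compl

end PairClass

theorem fB_of_zero_mem {s : Set ℕ} (h : 0 ∈ s) : fB s = univ := if_pos h

theorem mem_fB_iff {s : Set ℕ} (h : 0 ∉ s) {n : ℕ} : n ∈ fB s ↔ n + 1 ∈ s := by
  rw [fB, if_neg h]
  constructor
  · rintro ⟨m, hm, rfl⟩
    rwa [Nat.sub_add_cancel (Nat.pos_of_ne_zero fun h0 => h (h0 ▸ hm))]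
  · exact fun hn => ⟨n + 1, hn, rfl⟩

theorem eq_empty_or_univ_of_fB_eq {s : Set ℕ} (h : fB s = s) : s = ∅ ∨ s = univ := by
  by_cases h0 : 0 ∈ s
  · exact Or.inr (h ▸ fB_of_zero_mem h0)
  · refine Or.inl (eq_empty_of_forall_notMem fun n => ?_)
    induction n with
    | zero => exact h0
    | succ n ih => exact fun hn => ih (h ▸ (mem_fB_iff h0).2 hn)

theorem F12_diag (s : Set ℕ) : F12 (s, s) = (fB s, fB s) := if_pos rfl

theorem F12_of_ne {p : Set ℕ × Set ℕ} (h : p.1 ≠ p.2) : F12 p = ⊤ := if_neg h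

theorem F12_bot : F12 ⊥ = ⊥ := by
  simp [show (⊥ : Set ℕ × Set ℕ) = (∅, ∅) from rfl, F12_diag, fB]

theorem F12_top : F12 ⊤ = ⊤ := by
  simp [show (⊤ : Set ℕ × Set ℕ) = (univ, univ) from rfl, F12_diag, fB]

theorem eq_bot_or_top_of_F12_eq {p : Set ℕ × Set ℕ} (h : F12 p = p) : p = ⊥ ∨ p = ⊤ := by
  obtain ⟨s, t⟩ := p
  by_cases hst : s = t
  · subst hst
    rw [F12_diag] at h
    rcases eq_empty_or_univ_of_fB_eq (congrArg Prod.fst h) with rfl | rfl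
    exacts [Or.inl rfl, Or.inr rfl]
  · rw [F12_of_ne hst] at h
    exact absurd (congrArg Prod.fst h.symm |>.trans (congrArg Prod.snd h)) hst

theorem F12_inf_eq_top_or {p : Set ℕ × Set ℕ} (hp : p ≠ ⊥) :
    F12 (p ⊓ (univ, ∅)) = ⊤ ∨ F12 (p ⊓ (∅, univ)) = ⊤ := by
  obtain ⟨s, t⟩ := p
  by_cases hs : s = ∅
  · subst hs
    refine Or.inr (F12_of_ne ?_)
    simpa [eq_comm, show (⊥ : Set ℕ × Set ℕ) = (∅, ∅) from rfl] using hp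
  · exact Or.inl (F12_of_ne (by simpa using hs))

section Ultrapower

local notation "𝔄" => Set ℕ × Set ℕ

variable {l : Filter ℕ}

def diagGerm (a : ℕ → Set ℕ) : Germ l 𝔄 := ↑fun i => (a i, a i)

theorem diagGerm_inf (a b : ℕ → Set ℕ) :
    diagGerm a ⊓ diagGerm b = (diagGerm (fun i => a i ∩ b i) : Germ l 𝔄) := rfl

theorem diagGerm_compl (a : ℕ → Set ℕ) :
    (diagGerm a)ᶜ = (diagGerm (fun i => (a i)ᶜ) : Germ l 𝔄) := rfl

theorem diagGerm_empty : (diagGerm (fun _ => ∅) : Germ l 𝔄) = ⊥ := rfl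

theorem diagGerm_univ : (diagGerm (fun _ => univ) : Germ l 𝔄) = ⊤ := rfl

theorem diagGerm_eq_iff {a b : ℕ → Set ℕ} :
    (diagGerm a : Germ l 𝔄) = diagGerm b ↔ ∀ᶠ i in l, a i = b i := by
  simp only [diagGerm, Germ.coe_eq, EventuallyEq, Prod.mk.injEq, and_self]

theorem map_F12_diagGerm (a : ℕ → Set ℕ) :
    Germ.map F12 (diagGerm a : Germ l 𝔄) = diagGerm fun i => fB (a i) := by
  simp only [diagGerm, Germ.map_coe, Function.comp_def, F12_diag]

theorem map_F12_bot : Germ.map F12 (⊥ : Germ l 𝔄) = ⊥ := by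
  rw [← Germ.const_bot, Germ.map_const, F12_bot]

theorem map_F12_top : Germ.map F12 (⊤ : Germ l 𝔄) = ⊤ := by
  rw [← Germ.const_top, Germ.map_const, F12_top]

variable (l) in
def diagonal : BooleanSubalgebra (Germ l 𝔄) where
  carrier := range diagGerm
  supClosed' _ := fun ⟨a, ha⟩ _ ⟨b, hb⟩ => ⟨fun i => a i ∪ b i, by rw [← ha, ← hb]; rfl⟩
  infClosed' _ := fun ⟨a, ha⟩ _ ⟨b, hb⟩ => ⟨fun i => a i ∩ b i, by rw [← ha, ← hb]; rfl⟩
  compl_mem' := fun ⟨a, ha⟩ => ⟨fun i => (a i)ᶜ, by rw [← ha]; rfl⟩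
  bot_mem' := ⟨fun _ => ∅, rfl⟩

theorem diagGerm_mem_diagonal (a : ℕ → Set ℕ) : diagGerm a ∈ diagonal l := ⟨a, rfl⟩

theorem map_F12_mem_diagonal {x : Germ l 𝔄} (hx : x ∈ diagonal l) :
    Germ.map F12 x ∈ diagonal l := by
  obtain ⟨a, rfl⟩ := hx
  exact ⟨_, (map_F12_diagGerm a).symm⟩

variable (l) in
def windowGerm (k : ℕ) : Germ l 𝔄 := diagGerm fun i => Icc (i - k) i

theorem monotone_windowGerm : Monotone (windowGerm l) := fun k k' hkk' =>
  Germ.coe_le.2 <| .of_forall fun i => by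
    have : Icc (i - k) i ⊆ Icc (i - k') i := Icc_subset_Icc_left (by omega)
    exact ⟨this, this⟩

theorem agreeOutside_diagGerm_iff {a b : ℕ → Set ℕ} :
    AgreeOutside (windowGerm l) (diagGerm a) (diagGerm b) ↔
      ∃ k, ∀ᶠ i in l, a i ∩ (Icc (i - k) i)ᶜ = b i ∩ (Icc (i - k) i)ᶜ := by
  simp only [AgreeOutside, windowGerm, diagGerm_compl, diagGerm_inf, diagGerm_eq_iff]

theorem fB_inter_compl_Icc {s t : Set ℕ} {k i : ℕ} (hki : k < i)
    (h : s ∩ (Icc (i - k) i)ᶜ = t ∩ (Icc (i - k) i)ᶜ) :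
    fB s ∩ (Icc (i - (k + 1)) i)ᶜ = fB t ∩ (Icc (i - (k + 1)) i)ᶜ := by
  have hst : ∀ n ∉ Icc (i - k) i, n ∈ s ↔ n ∈ t := fun n hn => by
    simpa [hn] using congrArg (n ∈ ·) h
  have h0 : 0 ∉ Icc (i - k) i := by simp only [mem_Icc]; omega
  by_cases hs : 0 ∈ s
  · rw [fB_of_zero_mem hs, fB_of_zero_mem ((hst 0 h0).1 hs)]
  · have ht : 0 ∉ t := fun h => hs ((hst 0 h0).2 h)
    ext n
    simp only [mem_inter_iff, mem_compl_iff, mem_fB_iff hs, mem_fB_iff ht]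
    refine and_congr_left fun hn => hst (n + 1) fun hn' => hn ?_
    simp only [mem_Icc] at hn' ⊢
    omega

theorem AgreeOutside.map_F12 (hl : l ≤ atTop) {x y : Germ l 𝔄} (hx : x ∈ diagonal l)
    (hy : y ∈ diagonal l) (h : AgreeOutside (windowGerm l) x y) :
    AgreeOutside (windowGerm l) (Germ.map F12 x) (Germ.map F12 y) := by
  obtain ⟨a, rfl⟩ := hx
  obtain ⟨b, rfl⟩ := hy
  obtain ⟨k, hk⟩ := agreeOutside_diagGerm_iff.1 h
  rw [map_F12_diagGerm, map_F12_diagGerm, agreeOutside_diagGerm_iff]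
  exact ⟨k + 1, (hk.and ((eventually_gt_atTop k).filter_mono hl)).mono fun i hi =>
    fB_inter_compl_Icc hi.2 hi.1⟩

variable (l) in
def diagCongr (x y : Germ l 𝔄) : Prop :=
  x ∈ diagonal l ∧ y ∈ diagonal l ∧ AgreeOutside (windowGerm l) x y

theorem isCongrOn_diagCongr (hl : l ≤ atTop) :
    IsCongrOn (Germ.map F12) (diagonal l) (diagCongr l) where
  dom h := ⟨h.1, h.2.1⟩
  refl x hx := ⟨hx, hx, .refl x⟩
  symm h := ⟨h.2.1, h.1, h.2.2.symm⟩
  trans h h' := ⟨h.1, h'.2.1, h.2.2.trans monotone_windowGerm h'.2.2⟩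
  inf h h' := ⟨(diagonal l).inf_mem h.1 h'.1, (diagonal l).inf_mem h.2.1 h'.2.1,
    h.2.2.inf monotone_windowGerm h'.2.2⟩
  compl h := ⟨(diagonal l).compl_mem h.1, (diagonal l).compl_mem h.2.1, h.2.2.compl⟩
  map h := ⟨map_F12_mem_diagonal h.1, map_F12_mem_diagonal h.2.1, h.2.2.map_F12 hl h.1 h.2.1⟩

theorem not_agreeOutside_diagGerm_bot [l.NeBot] {a : ℕ → Set ℕ}
    (ha : ∀ k, ∀ᶠ i in l, (a i \ Icc (i - k) i).Nonempty) :
    ¬ AgreeOutside (windowGerm l) (diagGerm a) ⊥ := by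
  rw [← diagGerm_empty, agreeOutside_diagGerm_iff]
  rintro ⟨k, hk⟩
  obtain ⟨i, hi, n, hn⟩ := (hk.and (ha k)).exists
  have hn' : n ∈ a i ∩ (Icc (i - k) i)ᶜ := hn
  rw [hi] at hn'
  exact hn'.1

variable (l) in
def tailGerm : Germ l 𝔄 := diagGerm fun i => Ioi i

theorem not_agreeOutside_tailGerm_bot [l.NeBot] :
    ¬ AgreeOutside (windowGerm l) (tailGerm l) ⊥ :=
  not_agreeOutside_diagGerm_bot fun k => .of_forall fun i => ⟨i + 1, by simp⟩

theorem not_agreeOutside_compl_tailGerm_bot [l.NeBot] (hl : l ≤ atTop) :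
    ¬ AgreeOutside (windowGerm l) (tailGerm l)ᶜ ⊥ :=
  not_agreeOutside_diagGerm_bot fun k =>
    ((eventually_gt_atTop k).filter_mono hl).mono fun i hki =>
      ⟨0, by simp only [Set.mem_sdiff, mem_compl_iff, mem_Ioi, mem_Icc]; omega⟩

theorem agreeOutside_map_F12_tailGerm :
    AgreeOutside (windowGerm l) (Germ.map F12 (tailGerm l)) (tailGerm l) := by
  rw [tailGerm, map_F12_diagGerm, agreeOutside_diagGerm_iff]
  refine ⟨0, .of_forall fun i => ?_⟩
  ext n
  simp only [mem_inter_iff, mem_compl_iff, mem_fB_iff (notMem_Ioi.2 i.zero_le), mem_Ioi,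
    mem_Icc]
  omega

theorem map_F12_compl_tailGerm : Germ.map F12 (tailGerm l)ᶜ = ⊤ := by
  rw [tailGerm, diagGerm_compl, map_F12_diagGerm, ← diagGerm_univ]
  simp only [compl_Ioi, mem_Iic, zero_le, fB_of_zero_mem]

/-- Transported along `pairEmb t`, this is how `F` acts on the classes of `⊥, t, tᶜ, ⊤`. -/
def gFour (p : Bool × Bool) : Bool × Bool := (p.1 || p.2, p.2)

theorem agreeOutside_map_F12_pairEmb (p : Bool × Bool) :
    AgreeOutside (windowGerm l) (Germ.map F12 (pairEmb (tailGerm l) p))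
      (pairEmb (tailGerm l) (gFour p)) := by
  rcases p with ⟨_ | _, _ | _⟩ <;>
    simp [pairEmb, gFour, map_F12_bot, map_F12_top, map_F12_compl_tailGerm,
      agreeOutside_map_F12_tailGerm, AgreeOutside.refl]

variable (l) in
noncomputable def classSubalgebra : BooleanSubalgebra (Germ l 𝔄) :=
  diagonal l ⊓ pairSubalgebra monotone_windowGerm (tailGerm l)

theorem pairEmb_tailGerm_mem_diagonal (p : Bool × Bool) : pairEmb (tailGerm l) p ∈ diagonal l :=
  pairEmb_mem (diagGerm_mem_diagonal _) p

theorem map_F12_mem_classSubalgebra (hl : l ≤ atTop) {x : Germ l 𝔄}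
    (hx : x ∈ classSubalgebra l) : Germ.map F12 x ∈ classSubalgebra l := by
  obtain ⟨hx_diag, p, hp⟩ := hx
  exact ⟨map_F12_mem_diagonal hx_diag, gFour p, (hp.map_F12 hl hx_diag
    (pairEmb_tailGerm_mem_diagonal p)).trans monotone_windowGerm (agreeOutside_map_F12_pairEmb p)⟩

theorem memHS_gFour [l.NeBot] (hl : l ≤ atTop) :
    MemHS (Germ.map F12 : Germ l 𝔄 → Germ l 𝔄) gFour := by
  have hw := monotone_windowGerm (l := l)
  have ht := not_agreeOutside_tailGerm_bot (l := l)
  have htc := not_agreeOutside_compl_tailGerm_bot hl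
  refine memHS_of_booleanSubalgebra (classSubalgebra l) (fun _ => map_F12_mem_classSubalgebra hl)
    (pairClass (windowGerm l) (tailGerm l)) ?_ (fun x hx y hy => pairClass_inf hw ht htc hx.2 hy.2)
    (fun x hx => pairClass_compl hw ht htc hx.2) (fun x hx => ?_) (fun p => ?_)
  · exact pairClass_eq hw ht htc (by rw [pairEmb_bot]; exact .refl ⊥)
  · exact pairClass_eq hw ht htc (((agreeOutside_pairClass hx.2).map_F12 hl hx.1
      (pairEmb_tailGerm_mem_diagonal _)).trans hw (agreeOutside_map_F12_pairEmb _))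
  · exact ⟨pairEmb (tailGerm l) p, ⟨pairEmb_tailGerm_mem_diagonal p, p, .refl _⟩,
      pairClass_eq hw ht htc (.refl _)⟩

theorem not_hasCEP_map_F12 [l.NeBot] (hl : l ≤ atTop) :
    ¬ HasCEP (Germ.map F12 : Germ l 𝔄 → Germ l 𝔄) := by
  refine not_hasCEP_of_isCongrOn ((diagonal l).isSubalg fun _ => map_F12_mem_diagonal)
    (isCongrOn_diagCongr hl) map_F12_bot (b := diagGerm fun i => {i}) (a := ↑((univ, ∅) : 𝔄))
    ?_ ?_ fun h => not_agreeOutside_tailGerm_bot (l := l) ?_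
  · refine ⟨diagGerm_mem_diagonal _, (diagonal l).bot_mem, ?_⟩
    rw [← diagGerm_empty, agreeOutside_diagGerm_iff]
    refine ⟨0, .of_forall fun i => ?_⟩
    ext n
    simp
  · rw [← Germ.const_top]
    exact Germ.coe_eq.2 (.of_forall fun i => F12_of_ne (by simp))
  · simpa using (AgreeOutside.refl (tailGerm l)).inf monotone_windowGerm h.2.2

variable {U : Ultrafilter ℕ}

theorem eq_bot_or_top_of_map_F12_eq (x : Germ (U : Filter ℕ) 𝔄) :
    Germ.map F12 x = x → x = ⊥ ∨ x = ⊤ :=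
  Germ.inductionOn x fun f h => by
    rw [Germ.map_coe, Germ.coe_eq] at h
    exact (Ultrafilter.eventually_or.1 (h.mono fun i => eq_bot_or_top_of_F12_eq)).imp
      Germ.coe_eq.2 Germ.coe_eq.2

theorem exists_le_map_F12_eq_top (z : Germ (U : Filter ℕ) 𝔄) :
    z ≠ ⊥ → ∃ y ≤ z, Germ.map F12 y = ⊤ :=
  Germ.inductionOn z fun c hc => by
    have hc' : ∀ᶠ i in (U : Filter ℕ), c i ≠ ⊥ :=
      Ultrafilter.eventually_not.2 fun h => hc (Germ.coe_eq.2 h)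
    rcases Ultrafilter.eventually_or.1 (hc'.mono fun i => F12_inf_eq_top_or) with h | h
    · exact ⟨↑c ⊓ ↑((univ, ∅) : 𝔄), inf_le_left, Germ.coe_eq.2 h⟩
    · exact ⟨↑c ⊓ ↑((∅, univ) : 𝔄), inf_le_left, Germ.coe_eq.2 h⟩

theorem not_memSH_gFour : ¬ MemSH (Germ.map F12 : Germ (U : Filter ℕ) 𝔄 → _) gFour :=
  not_memSH_of_fixedPoint map_F12_bot exists_le_map_F12_eq_top eq_bot_or_top_of_map_F12_eq
    (d := (true, false)) rfl (by decide) (by decide)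

end Ultrapower

/-- for a nonprincipal ultrafilter `U` on `ℕ`, the ultrapower `𝔄^ℕ/U` of
the Boolean frame `𝔄 = (𝒫(ℕ) × 𝒫(ℕ), F12)` fails the congruence extension property;
moreover `HS(𝔄^ℕ/U) ≠ SH(𝔄^ℕ/U)`. -/
theorem stmt_13 (U : Ultrafilter ℕ) (hU : ∀ a : ℕ, (U : Filter ℕ) ≠ pure a) :
    ¬ HasCEP (Filter.Germ.map F12 :
        Filter.Germ (U : Filter ℕ) (Set ℕ × Set ℕ) → Filter.Germ (U : Filter ℕ) (Set ℕ × Set ℕ)) ∧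
    ¬ (∀ (δ : Type) (iδ : BooleanAlgebra δ) (g : δ → δ),
        @MemHS (Filter.Germ (U : Filter ℕ) (Set ℕ × Set ℕ)) δ _ iδ (Filter.Germ.map F12) g ↔
        @MemSH (Filter.Germ (U : Filter ℕ) (Set ℕ × Set ℕ)) δ _ iδ (Filter.Germ.map F12) g) := by
  have hU_le : (U : Filter ℕ) ≤ atTop := Nat.cofinite_eq_atTop ▸
    U.le_cofinite_or_eq_pure.resolve_right fun ⟨a, ha⟩ => hU a (by rw [ha, Ultrafilter.coe_pure])
  exact ⟨not_hasCEP_map_F12 hU_le,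
    fun h => not_memSH_gFour ((h _ _ gFour).1 (memHS_gFour hU_le))⟩
end
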